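/- arXiv:2306.02340 — 7 statements merged into one kernel-verified Lean document; each statement's English description precedes it below -/
import Mathlib

section
/- Let λ₁ ≥ 0, μ ≥ 0 and ρ > μ be real numbers, let C ≥ 1, D ≥ 0, and let 0 < τ ≤ 1 satisfy τ < (ρ − μ)/(λ₁ + 3). Let R : ℕ → [0, ∞) satisfy R(0) = 0 and R(l) − R(k) ≥ l − k for all naturals k ≤ l. Let (u_{k,l})_{k ≤ l}, (q_l)_{l ≥ 0}, (z_l)_{l ≥ 0}, (s_l)_{l ≥ 0} be nonnegative reals with u_{k,l} ≤ C·exp((μ+τ)·(R(l) − R(k))) for all k ≤ l, q_l ≤ C·exp((λ₁+τ)·l), z_l ≤ C·exp(τ·l) and s_l ≤ D·exp(−ρ·R(l+1)) for all l. Then there is a constant C' > 0, depending only on C, τ, ρ, μ and λ₁ (not on D, R or k), such that for every k ≥ 0 the series Σ_{l ≥ k} u_{k,l+1}·(q_{l+1})^τ·z_{l+1}·s_l converges and its sum is at most C'·D·exp((−ρ + (λ₁+2)·τ)·R(k)). -/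
open Real

/-- Proposition 3.7 of the paper (bound for the Diophantine series `V`),
with the FFDC bounds taken as explicit hypotheses. -/
theorem stmt_0
    (lam1 mu rho C tau : ℝ)
    (hlam1 : 0 ≤ lam1) (hmu : 0 ≤ mu) (hrho : mu < rho)
    (hC : 1 ≤ C)
    (htau0 : 0 < tau) (htau1 : tau ≤ 1)
    (htau : tau < (rho - mu) / (lam1 + 3)) :
    ∃ C' > 0, ∀ (D : ℝ), 0 ≤ D →
      ∀ (R : ℕ → ℝ) (u : ℕ → ℕ → ℝ) (q z s : ℕ → ℝ),
      (∀ k, 0 ≤ R k) → R 0 = 0 →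
      (∀ k l : ℕ, k ≤ l → (l : ℝ) - (k : ℝ) ≤ R l - R k) →
      (∀ k l, k ≤ l → 0 ≤ u k l) → (∀ l, 0 ≤ q l) → (∀ l, 0 ≤ z l) →
      (∀ l, 0 ≤ s l) →
      (∀ k l, k ≤ l → u k l ≤ C * exp ((mu + tau) * (R l - R k))) →
      (∀ l, q l ≤ C * exp ((lam1 + tau) * l)) →
      (∀ l, z l ≤ C * exp (tau * l)) →
      (∀ l, s l ≤ D * exp (-rho * R (l + 1))) →
      ∀ k : ℕ,
        Summable (fun l : ℕ =>
          u k (k + l + 1) * (q (k + l + 1)) ^ tau * z (k + l + 1) * s (k + l)) ∧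
        (∑' l : ℕ, u k (k + l + 1) * (q (k + l + 1)) ^ tau * z (k + l + 1) * s (k + l))
          ≤ C' * D * exp ((-rho + (lam1 + 2) * tau) * R k) := by
  have hC0 : (0:ℝ) < C := lt_of_lt_of_le one_pos hC
  set ε : ℝ := rho - mu - (lam1 + 3) * tau with hεdef
  have hεpos : 0 < ε := by
    have h3 : (0:ℝ) < lam1 + 3 := by linarith
    have := (lt_div_iff₀ h3).mp htau
    simp only [hεdef]; nlinarith
  have hr0 : (0:ℝ) ≤ exp (-ε) := (exp_pos _).le
  have hr1 : exp (-ε) < 1 := exp_lt_one_iff.mpr (by linarith)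
  have h1r : (0:ℝ) < 1 - exp (-ε) := by linarith
  refine ⟨C ^ 3 / (1 - exp (-ε)), by positivity, ?_⟩
  intro D hD R u q z s hRnn hR0 hRdiff hu0 hq0 hz0 hs0 hub hqb hzb hsb k
  set A : ℝ := C ^ 3 * D * exp ((-rho + (lam1 + 2) * tau) * R k) with hA
  have hA0 : 0 ≤ A := by positivity
  have key : ∀ j : ℕ, u k (k + j + 1) * (q (k + j + 1)) ^ tau * z (k + j + 1) * s (k + j)
      ≤ A * exp (-ε) ^ (j + 1) := by
    intro j
    have hkl : k ≤ k + j + 1 := by omega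
    have hXK : R k + ((j : ℝ) + 1) ≤ R (k + j + 1) := by
      have := hRdiff k (k + j + 1) hkl
      push_cast at this
      linarith
    have hLX : ((k : ℝ) + j + 1) ≤ R (k + j + 1) := by
      have := hRdiff 0 (k + j + 1) (Nat.zero_le _)
      push_cast at this
      rw [hR0] at this
      linarith
    have hL0 : (0:ℝ) ≤ (k : ℝ) + j + 1 := by positivity
    -- bound q ^ tau
    have hqbt : (q (k + j + 1)) ^ tau ≤ C * exp ((lam1 + tau) * ((k : ℝ) + j + 1) * tau) := by
      calc (q (k + j + 1)) ^ tau ≤ (C * exp ((lam1 + tau) * ((k + j + 1 : ℕ) : ℝ))) ^ tau :=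
            Real.rpow_le_rpow (hq0 _) (hqb _) htau0.le
        _ = C ^ tau * exp ((lam1 + tau) * ((k : ℝ) + j + 1) * tau) := by
            rw [Real.mul_rpow hC0.le (exp_pos _).le, ← Real.exp_mul]
            push_cast
            ring_nf
        _ ≤ C * exp ((lam1 + tau) * ((k : ℝ) + j + 1) * tau) := by
            have hCt : C ^ tau ≤ C ^ (1:ℝ) := Real.rpow_le_rpow_of_exponent_le hC htau1
            rw [Real.rpow_one] at hCt
            exact mul_le_mul_of_nonneg_right hCt (exp_pos _).le
    have h1 : u k (k + j + 1) ≤ C * exp ((mu + tau) * (R (k + j + 1) - R k)) :=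
      hub k (k + j + 1) hkl
    have h3 : z (k + j + 1) ≤ C * exp (tau * ((k : ℝ) + j + 1)) := by
      have := hzb (k + j + 1)
      push_cast at this
      convert this using 3 <;> push_cast <;> ring
    have h4 : s (k + j) ≤ D * exp (-rho * R (k + j + 1)) := hsb _
    have step : u k (k + j + 1) * (q (k + j + 1)) ^ tau * z (k + j + 1) * s (k + j) ≤
        (C * exp ((mu + tau) * (R (k + j + 1) - R k))) *
        (C * exp ((lam1 + tau) * ((k : ℝ) + j + 1) * tau)) *
        (C * exp (tau * ((k : ℝ) + j + 1))) * (D * exp (-rho * R (k + j + 1))) := by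
      have hq0' : (0:ℝ) ≤ (q (k + j + 1)) ^ tau := Real.rpow_nonneg (hq0 _) _
      gcongr <;>
        first
          | exact hu0 k (k + j + 1) hkl
          | exact hq0'
          | exact hz0 _
          | exact hs0 _
    refine step.trans ?_
    set X : ℝ := R (k + j + 1)
    set K : ℝ := R k
    set L : ℝ := (k : ℝ) + j + 1
    have hK0 : 0 ≤ K := hRnn k
    -- exponent inequality
    have ha : (lam1 + tau) * L * tau ≤ (lam1 + 1) * L * tau := by
      have : (lam1 + tau) * L ≤ (lam1 + 1) * L :=
        mul_le_mul_of_nonneg_right (by linarith) hL0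
      exact mul_le_mul_of_nonneg_right this htau0.le
    have hb : (lam1 + 2) * tau * L ≤ (lam1 + 2) * tau * X :=
      mul_le_mul_of_nonneg_left hLX (by positivity)
    have hc : (rho - mu - (lam1 + 3) * tau) * (K + ((j : ℝ) + 1))
        ≤ (rho - mu - (lam1 + 3) * tau) * X := by
      have h0 : (0:ℝ) ≤ rho - mu - (lam1 + 3) * tau := by rw [hεdef] at hεpos; linarith
      exact mul_le_mul_of_nonneg_left hXK h0
    have hexpo : (mu + tau) * (X - K) + (lam1 + tau) * L * tau + tau * L + (-rho) * X
        ≤ (-rho + (lam1 + 2) * tau) * K + ((j : ℝ) + 1) * (-ε) := by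
      rw [hεdef]
      nlinarith [ha, hb, hc]
    have hexp : exp ((mu + tau) * (X - K)) * exp ((lam1 + tau) * L * tau) *
        exp (tau * L) * exp (-rho * X)
        ≤ exp ((-rho + (lam1 + 2) * tau) * K) * exp (-ε) ^ (j + 1) := by
      rw [← Real.exp_add, ← Real.exp_add, ← Real.exp_add]
      have : exp (-ε) ^ (j + 1) = exp (((j : ℝ) + 1) * (-ε)) := by
        rw [← Real.exp_nat_mul]
        push_cast
        ring_nf
      rw [this, ← Real.exp_add]
      exact exp_le_exp.mpr hexpo
    calc (C * exp ((mu + tau) * (X - K))) * (C * exp ((lam1 + tau) * L * tau)) *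
          (C * exp (tau * L)) * (D * exp (-rho * X))
        = (C ^ 3 * D) * (exp ((mu + tau) * (X - K)) * exp ((lam1 + tau) * L * tau) *
            exp (tau * L) * exp (-rho * X)) := by ring
      _ ≤ (C ^ 3 * D) * (exp ((-rho + (lam1 + 2) * tau) * K) * exp (-ε) ^ (j + 1)) :=
          mul_le_mul_of_nonneg_left hexp (by positivity)
      _ = A * exp (-ε) ^ (j + 1) := by rw [hA]; ring
  have hgeom : Summable (fun j : ℕ => A * exp (-ε) ^ (j + 1)) := by
    have := (summable_geometric_of_lt_one hr0 hr1).mul_left (A * exp (-ε))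
    refine this.congr fun j => ?_
    rw [pow_succ]
    ring
  have hnn : ∀ j : ℕ, 0 ≤ u k (k + j + 1) * (q (k + j + 1)) ^ tau * z (k + j + 1) * s (k + j) :=
    fun j => mul_nonneg (mul_nonneg (mul_nonneg (hu0 k _ (by omega))
      (Real.rpow_nonneg (hq0 _) _)) (hz0 _)) (hs0 _)
  have hsum : Summable (fun l : ℕ =>
      u k (k + l + 1) * (q (k + l + 1)) ^ tau * z (k + l + 1) * s (k + l)) :=
    Summable.of_nonneg_of_le hnn key hgeom
  refine ⟨hsum, ?_⟩
  have htsle : (∑' l : ℕ, u k (k + l + 1) * (q (k + l + 1)) ^ tau * z (k + l + 1) * s (k + l))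
      ≤ ∑' j : ℕ, A * exp (-ε) ^ (j + 1) := Summable.tsum_le_tsum key hsum hgeom
  have hgval : (∑' j : ℕ, A * exp (-ε) ^ (j + 1)) = A * exp (-ε) * (1 - exp (-ε))⁻¹ := by
    have h1 : (fun j : ℕ => A * exp (-ε) ^ (j + 1))
        = fun j : ℕ => (A * exp (-ε)) * exp (-ε) ^ j := by
      funext j; rw [pow_succ]; ring
    rw [h1, tsum_mul_left, tsum_geometric_of_lt_one hr0 hr1]
  refine htsle.trans ?_
  rw [hgval, hA]
  rw [div_mul_eq_mul_div, div_mul_eq_mul_div, le_div_iff₀ h1r]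
  have hre : exp (-ε) ≤ 1 := hr1.le
  have hE : (0:ℝ) ≤ D * exp ((-rho + (lam1 + 2) * tau) * R k) := by positivity
  calc C ^ 3 * D * exp ((-rho + (lam1 + 2) * tau) * R k) * exp (-ε) * (1 - exp (-ε))⁻¹ *
        (1 - exp (-ε))
      = C ^ 3 * D * exp ((-rho + (lam1 + 2) * tau) * R k) * exp (-ε) := by
        field_simp
    _ ≤ C ^ 3 * D * exp ((-rho + (lam1 + 2) * tau) * R k) * 1 := by
        have h0 : (0:ℝ) ≤ C ^ 3 * D * exp ((-rho + (lam1 + 2) * tau) * R k) := by positivity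
        exact mul_le_mul_of_nonneg_left hre h0
    _ = C ^ 3 * D * exp ((-rho + (lam1 + 2) * tau) * R k) := by ring
end

section
/- Let λ₁ ≥ 0, ν ≥ 0 and ρ > 0 be real numbers, let C ≥ 1, D ≥ 0 and 0 < τ ≤ 1. Let R : ℕ → [0, ∞) satisfy R(0) = 0 and R(l) − R(k) ≥ l − k for all naturals k ≤ l. Let (e_{l,k})_{l ≤ k}, (q_l)_{l ≥ 0}, (z_l)_{l ≥ 0}, (s_l)_{l ≥ 0} be nonnegative reals with e_{l,k} ≤ C·exp((−ν+τ)·(R(k) − R(l))) for all l ≤ k, q_l ≤ C·exp((λ₁+τ)·l), z_l ≤ C·exp(τ·l) and s_l ≤ D·exp(−ρ·R(l+1)) for all l. Then there is a constant C' > 0, depending only on C and τ, such that for every k ≥ 1, Σ_{0 ≤ l < k} e_{l+1,k}·(q_{l+1})^τ·z_{l+1}·s_l ≤ C'·D·exp((max{−ρ, −ν} + (λ₁+3)·τ)·R(k)). -/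
/-!
Every term of the series is bounded by `C³ D e^{(max(-ρ,-ν) + (λ₁+2)τ) R(k)}`: the growth
`e^{(λ₁+τ)τ(l+1) + τ(l+1)}` of `q^τ z` is absorbed into `e^{(λ₁+2)τ R(k)}` because
`l + 1 ≤ R(l+1) ≤ R(k)` and `τ ≤ 1`, while the two decaying factors combine to at most
`e^{max(-ρ,-ν) R(k)}`. There are `k ≤ R(k) ≤ e^{τ R(k)}/τ` terms, which costs the last `τ`.
-/

open Real

lemma monotone_of_natCast_sub_le_sub {R : ℕ → ℝ}
    (hR : ∀ k l : ℕ, k ≤ l → (l : ℝ) - (k : ℝ) ≤ R l - R k) : Monotone R := by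
  intro k l hkl
  have : (k : ℝ) ≤ l := by exact_mod_cast hkl
  linarith [hR k l hkl]

lemma natCast_le_of_natCast_sub_le_sub {R : ℕ → ℝ} (hR0 : R 0 = 0)
    (hR : ∀ k l : ℕ, k ≤ l → (l : ℝ) - (k : ℝ) ≤ R l - R k) (l : ℕ) : (l : ℝ) ≤ R l := by
  simpa [hR0] using hR 0 l l.zero_le

lemma le_exp_mul_div {x τ : ℝ} (hτ : 0 < τ) : x ≤ exp (τ * x) / τ := by
  rw [le_div_iff₀ hτ]
  linarith [add_one_le_exp (τ * x)]

lemma rpow_le_mul_exp_mul {Q C y τ : ℝ} (hQ0 : 0 ≤ Q) (hQ : Q ≤ C * exp y) (hC : 1 ≤ C)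
    (hτ0 : 0 ≤ τ) (hτ1 : τ ≤ 1) : Q ^ τ ≤ C * exp (τ * y) := calc
  Q ^ τ ≤ (C * exp y) ^ τ := rpow_le_rpow hQ0 hQ hτ0
  _ = C ^ τ * exp (τ * y) := by
    rw [mul_rpow (by linarith) (exp_pos y).le, ← exp_mul, mul_comm y]
  _ ≤ C * exp (τ * y) := by gcongr; exact rpow_le_self_of_one_le hC hτ1

lemma exponent_le {lam nu rho τ x a b : ℝ} (hlam : 0 ≤ lam) (hτ0 : 0 ≤ τ) (hτ1 : τ ≤ 1)
    (hx : 0 ≤ x) (hxa : x ≤ a) (hab : a ≤ b) :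
    (-nu + τ) * (b - a) + τ * ((lam + τ) * x) + τ * x + -rho * a
      ≤ (max (-rho) (-nu) + (lam + 2) * τ) * b := by
  have hdecay : -nu * (b - a) + -rho * a ≤ max (-rho) (-nu) * b := by
    nlinarith [le_max_left (-rho) (-nu), le_max_right (-rho) (-nu)]
  have hgrowth : (lam + τ) * x ≤ (lam + 1) * b := by
    have : (lam + τ) * x ≤ (lam + 1) * x := by gcongr
    nlinarith
  nlinarith [mul_le_mul_of_nonneg_left hgrowth hτ0]

lemma mul_le_of_exp_bounds {C D lam nu rho τ x a b E Q Z S : ℝ} (hC : 1 ≤ C) (hτ0 : 0 < τ)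
    (hτ1 : τ ≤ 1) (hlam : 0 ≤ lam) (hx : 0 ≤ x) (hxa : x ≤ a) (hab : a ≤ b)
    (hQ0 : 0 ≤ Q) (hZ0 : 0 ≤ Z) (hS0 : 0 ≤ S)
    (hE : E ≤ C * exp ((-nu + τ) * (b - a))) (hQ : Q ≤ C * exp ((lam + τ) * x))
    (hZ : Z ≤ C * exp (τ * x)) (hS : S ≤ D * exp (-rho * a)) :
    E * Q ^ τ * Z * S ≤ C ^ 3 * D * exp ((max (-rho) (-nu) + (lam + 2) * τ) * b) := calc
  E * Q ^ τ * Z * S ≤ C * exp ((-nu + τ) * (b - a)) * (C * exp (τ * ((lam + τ) * x)))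
      * (C * exp (τ * x)) * (D * exp (-rho * a)) := by
    have := rpow_le_mul_exp_mul hQ0 hQ hC hτ0.le hτ1
    have : 0 ≤ Q ^ τ := rpow_nonneg hQ0 τ
    gcongr
  _ = C ^ 3 * D * exp ((-nu + τ) * (b - a) + τ * ((lam + τ) * x) + τ * x + -rho * a) := by
    simp only [exp_add]; ring
  _ ≤ C ^ 3 * D * exp ((max (-rho) (-nu) + (lam + 2) * τ) * b) := by
    have : 0 ≤ D := nonneg_of_mul_nonneg_left (hS0.trans hS) (exp_pos _)
    gcongr
    exact exponent_le hlam hτ0.le hτ1 hx hxa hab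

/-- Proposition 3.7 of the paper (bound for the Diophantine series `W`),
with the FFDC bounds taken as explicit hypotheses; the constant `C'`
depends only on `C` and `tau`. -/
theorem stmt_1 (C tau : ℝ) (hC : 1 ≤ C) (htau0 : 0 < tau) (htau1 : tau ≤ 1) :
    ∃ C' > 0, ∀ (lam1 nu rho D : ℝ), 0 ≤ lam1 → 0 ≤ nu → 0 < rho → 0 ≤ D →
      ∀ (R : ℕ → ℝ) (e : ℕ → ℕ → ℝ) (q z s : ℕ → ℝ),
      (∀ k, 0 ≤ R k) → R 0 = 0 →
      (∀ k l : ℕ, k ≤ l → (l : ℝ) - (k : ℝ) ≤ R l - R k) →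
      (∀ l k, l ≤ k → 0 ≤ e l k) → (∀ l, 0 ≤ q l) → (∀ l, 0 ≤ z l) →
      (∀ l, 0 ≤ s l) →
      (∀ l k, l ≤ k → e l k ≤ C * exp ((-nu + tau) * (R k - R l))) →
      (∀ l, q l ≤ C * exp ((lam1 + tau) * l)) →
      (∀ l, z l ≤ C * exp (tau * l)) →
      (∀ l, s l ≤ D * exp (-rho * R (l + 1))) →
      ∀ k : ℕ, 1 ≤ k →
        ∑ l ∈ Finset.range k, e (l + 1) k * (q (l + 1)) ^ tau * z (l + 1) * s l
          ≤ C' * D * exp ((max (-rho) (-nu) + (lam1 + 3) * tau) * R k) := by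
  refine ⟨C ^ 3 / tau, by positivity, ?_⟩
  intro lam1 nu rho D hlam1 _ _ hD R e q z s _ hR0 hR _ hq0 hz0 hs0 he hq hz hs k _
  have hterm : ∀ l ∈ Finset.range k, e (l + 1) k * q (l + 1) ^ tau * z (l + 1) * s l
      ≤ C ^ 3 * D * exp ((max (-rho) (-nu) + (lam1 + 2) * tau) * R k) := fun l hl =>
    have hlk : l + 1 ≤ k := Finset.mem_range.mp hl
    mul_le_of_exp_bounds hC htau0 htau1 hlam1 (Nat.cast_nonneg _)
      (natCast_le_of_natCast_sub_le_sub hR0 hR _) (monotone_of_natCast_sub_le_sub hR hlk)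
      (hq0 _) (hz0 _) (hs0 _) (he _ _ hlk) (hq _) (hz _) (hs _)
  calc ∑ l ∈ Finset.range k, e (l + 1) k * q (l + 1) ^ tau * z (l + 1) * s l
      ≤ k * (C ^ 3 * D * exp ((max (-rho) (-nu) + (lam1 + 2) * tau) * R k)) := by
        simpa using Finset.sum_le_card_nsmul _ _ _ hterm
    _ ≤ exp (tau * R k) / tau
          * (C ^ 3 * D * exp ((max (-rho) (-nu) + (lam1 + 2) * tau) * R k)) := by
        gcongr
        exact (natCast_le_of_natCast_sub_le_sub hR0 hR k).trans (le_exp_mul_div htau0)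
    _ = C ^ 3 / tau * D * exp ((max (-rho) (-nu) + (lam1 + 3) * tau) * R k) := by
        rw [show (max (-rho) (-nu) + (lam1 + 3) * tau) * R k
            = tau * R k + (max (-rho) (-nu) + (lam1 + 2) * tau) * R k by ring, exp_add]
        ring
end

section
/- Let n ≥ 1 be an integer, let u < v be real numbers, let A > 0, and let f : [u,v] → ℝ be n times continuously differentiable with |f^{(n)}(x)| ≥ A for every x ∈ [u,v]. Then there exists a closed subinterval J ⊆ [u,v] of length at least (v−u)/4^n such that |f(x)| ≥ A·(v−u)^n / 4^{n(n+1)/2} for every x ∈ J. -/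
/-!
If `f' ≥ A` on `[u,v]`, then `f` increases by at least `A(v-u)/2` from `u + (v-u)/4` to
`v - (v-u)/4`, so `f ≥ A(v-u)/4` on the last quarter of the interval or `f ≤ -A(v-u)/4` on the
first one; by Darboux's theorem, `|f'| ≥ A` forces `f' ≥ A` or `f' ≤ -A`. Applying this to `f` on
the interval that the induction hypothesis provides for `f'` multiplies the lower bound by a
quarter of that interval's length, whence the exponent `1 + 2 + ⋯ + n = n(n+1)/2`.
-/

open Set

lemma exists_Icc_le_abs_of_monotoneOn_sub_mul {f : ℝ → ℝ} {u v A : ℝ} (hA : 0 ≤ A) (huv : u < v)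
    (hf : MonotoneOn (fun x => f x - A * x) (Icc u v)) :
    ∃ p q : ℝ, u ≤ p ∧ p < q ∧ q ≤ v ∧ (v - u) / 4 ≤ q - p ∧
      ∀ x ∈ Icc p q, A * (v - u) / 4 ≤ |f x| := by
  have hc : u + (v - u) / 4 ∈ Icc u v := ⟨by linarith, by linarith⟩
  have hd : v - (v - u) / 4 ∈ Icc u v := ⟨by linarith, by linarith⟩
  have hcd : f (u + (v - u) / 4) + A * (v - u) / 2 ≤ f (v - (v - u) / 4) := by
    have := hf hc hd (by linarith)
    simp only at this
    linarith
  by_cases hfd : A * (v - u) / 4 ≤ f (v - (v - u) / 4)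
  · refine ⟨_, v, hd.1, by linarith, le_rfl, by linarith, fun x hx => ?_⟩
    have := hf hd ⟨hd.1.trans hx.1, hx.2⟩ hx.1
    simp only at this
    nlinarith [le_abs_self (f x), hx.1]
  · refine ⟨u, _, le_rfl, by linarith, hc.2, by linarith, fun x hx => ?_⟩
    have := hf ⟨hx.1, hx.2.trans hc.2⟩ hc hx.2
    simp only at this
    nlinarith [neg_le_abs (f x), hx.2]

lemma Set.OrdConnected.forall_le_or_forall_le_neg_of_le_abs_deriv {s : Set ℝ} {f f' : ℝ → ℝ}
    {A : ℝ} (hs : s.OrdConnected) (hA : 0 < A) (hf : ∀ x ∈ s, HasDerivWithinAt f (f' x) s x)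
    (hf' : ∀ x ∈ s, A ≤ |f' x|) : (∀ x ∈ s, A ≤ f' x) ∨ ∀ x ∈ s, f' x ≤ -A := by
  by_contra! h
  obtain ⟨⟨x, hx, hfx⟩, ⟨y, hy, hfy⟩⟩ := h
  have hx' : f' x ≤ -A := by cases abs_cases (f' x) <;> linarith [hf' x hx]
  have hy' : A ≤ f' y := by cases abs_cases (f' y) <;> linarith [hf' y hy]
  obtain ⟨z, hz, hfz⟩ : (0 : ℝ) ∈ f' '' s :=
    (hs.image_hasDerivWithinAt hf).out (mem_image_of_mem _ hx) (mem_image_of_mem _ hy)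
      ⟨by linarith, by linarith⟩
  linarith [hf' z hz, abs_eq_zero.2 hfz]

lemma exists_Icc_le_abs_of_le_deriv {f f' : ℝ → ℝ} {u v A : ℝ} (hA : 0 ≤ A) (huv : u < v)
    (hf : ∀ x ∈ Icc u v, HasDerivWithinAt f (f' x) (Icc u v) x)
    (hf' : ∀ x ∈ Icc u v, A ≤ f' x) :
    ∃ p q : ℝ, u ≤ p ∧ p < q ∧ q ≤ v ∧ (v - u) / 4 ≤ q - p ∧
      ∀ x ∈ Icc p q, A * (v - u) / 4 ≤ |f x| := by
  refine exists_Icc_le_abs_of_monotoneOn_sub_mul hA huv <|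
    monotoneOn_of_hasDerivWithinAt_nonneg (f' := fun x => f' x - A) (convex_Icc u v)
      (ContinuousOn.sub (fun x hx => (hf x hx).continuousWithinAt) (by fun_prop))
      (fun x hx => ?_) (fun x hx => sub_nonneg.2 (hf' x (interior_subset hx)))
  exact (((hf x (interior_subset hx)).sub ((hasDerivWithinAt_id x _).const_mul A)).mono
    interior_subset).congr_deriv (by ring)

lemma exists_Icc_le_abs_of_le_abs_deriv {f f' : ℝ → ℝ} {u v A : ℝ} (hA : 0 < A) (huv : u < v)
    (hf : ∀ x ∈ Icc u v, HasDerivWithinAt f (f' x) (Icc u v) x)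
    (hf' : ∀ x ∈ Icc u v, A ≤ |f' x|) :
    ∃ p q : ℝ, u ≤ p ∧ p < q ∧ q ≤ v ∧ (v - u) / 4 ≤ q - p ∧
      ∀ x ∈ Icc p q, A * (v - u) / 4 ≤ |f x| := by
  rcases ordConnected_Icc.forall_le_or_forall_le_neg_of_le_abs_deriv hA hf hf' with hpos | hneg
  · exact exists_Icc_le_abs_of_le_deriv hA.le huv hf hpos
  · simpa using exists_Icc_le_abs_of_le_deriv (f := -f) (f' := -f') hA.le huv
      (fun x hx => (hf x hx).neg) (fun x hx => le_neg.1 (hneg x hx))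

theorem stmt_2_general (n : ℕ) (u v A : ℝ) (huv : u < v) (hA : 0 < A)
    (f : ℝ → ℝ) (hf : ContDiffOn ℝ n f (Set.Icc u v))
    (hder : ∀ x ∈ Set.Icc u v, A ≤ |iteratedDerivWithin n f (Set.Icc u v) x|) :
    ∃ p q : ℝ, u ≤ p ∧ p < q ∧ q ≤ v ∧ (v - u) / 4 ^ n ≤ q - p ∧
      ∀ x ∈ Set.Icc p q, A * (v - u) ^ n / 4 ^ (n * (n + 1) / 2) ≤ |f x| := by
  induction n generalizing f with
  | zero => exact ⟨u, v, le_rfl, huv, le_rfl, by simp, fun x hx => by simpa using hder x hx⟩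
  | succ n ih =>
    obtain ⟨p, q, hup, hpq, hqv, hlen, hbound⟩ :=
      ih _ (hf.derivWithin (uniqueDiffOn_Icc huv) le_rfl)
        (fun x hx => by simpa only [iteratedDerivWithin_succ'] using hder x hx)
    have hsub : Icc p q ⊆ Icc u v := Icc_subset_Icc hup hqv
    obtain ⟨p', q', hpp', hpq', hqq', hlen', hbound'⟩ :=
      exists_Icc_le_abs_of_le_abs_deriv (by positivity) hpq
        (fun x hx => ((hf.differentiableOn (by simp) x (hsub hx)).hasDerivWithinAt).mono hsub)
        hbound
    refine ⟨p', q', hup.trans hpp', hpq', hqq'.trans hqv, ?_, fun x hx => ?_⟩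
    · rw [pow_succ, ← div_div]
      linarith
    · have hexp : (n + 1) * (n + 1 + 1) / 2 = n * (n + 1) / 2 + (n + 1) := by
        rw [show (n + 1) * (n + 1 + 1) = n * (n + 1) + 2 * (n + 1) by ring,
          Nat.add_mul_div_left _ _ two_pos]
      calc A * (v - u) ^ (n + 1) / 4 ^ ((n + 1) * (n + 1 + 1) / 2)
          = A * (v - u) ^ n / 4 ^ (n * (n + 1) / 2) * ((v - u) / 4 ^ n) / 4 := by
            rw [hexp, pow_add (4 : ℝ), pow_succ (v - u), pow_succ (4 : ℝ) n]
            field_simp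
        _ ≤ A * (v - u) ^ n / 4 ^ (n * (n + 1) / 2) * (q - p) / 4 := by gcongr
        _ ≤ |f x| := hbound' x hx

/-- The iterated lower-bound lemma from the proof of Lemma 5.4 of the paper:
if `|f⁽ⁿ⁾| ≥ A` on `[u,v]`, then there is a closed subinterval of length at least
`(v-u)/4ⁿ` on which `|f| ≥ A (v-u)ⁿ / 4^{n(n+1)/2}`. -/
theorem stmt_2 (n : ℕ) (hn : 1 ≤ n) (u v A : ℝ) (huv : u < v) (hA : 0 < A)
    (f : ℝ → ℝ) (hf : ContDiffOn ℝ n f (Set.Icc u v))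
    (hder : ∀ x ∈ Set.Icc u v, A ≤ |iteratedDerivWithin n f (Set.Icc u v) x|) :
    ∃ p q : ℝ, u ≤ p ∧ p < q ∧ q ≤ v ∧ (v - u) / 4 ^ n ≤ q - p ∧
      ∀ x ∈ Set.Icc p q, A * (v - u) ^ n / 4 ^ (n * (n + 1) / 2) ≤ |f x| :=
  stmt_2_general n u v A huv hA f hf hder
end

section
/- Let 0 < a < 1, c > 0, l ∈ ℝ and ε > 0. Let g : (l, l+ε] → ℝ be continuously differentiable with |g'(x)| ≥ c·(x−l)^{−(1+a)} for all x ∈ (l, l+ε]. Then there exists δ ∈ (0, ε] such that |g(x)| ≥ (c/(2a))·(x−l)^{−a} for all x ∈ (l, l+δ]. -/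
/-!
If, say, `g' ≥ c (x-l)^{-(1+a)}`, then `g + (c/a) (x-l)^{-a}` is nondecreasing on `(l, l+ε]`,
so `-g(x) ≥ (c/a) (x-l)^{-a} - C` with `C` fixed by the value at `l+ε`. As `(x-l)^{-a} → ∞`,
the constant `C` is eventually absorbed by half of the main term. A continuous `g'` bounded
away from `0` has constant sign, and the case `g' < 0` reduces to this one through `-g`.
-/

open Set Filter Topology

lemma IsPreconnected.forall_pos_or_forall_neg {α : Type*} [TopologicalSpace α] {s : Set α}
    {f : α → ℝ} (hs : IsPreconnected s) (hf : ContinuousOn f s) (hf0 : ∀ x ∈ s, f x ≠ 0) :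
    (∀ x ∈ s, 0 < f x) ∨ (∀ x ∈ s, f x < 0) := by
  have hsub : f '' s ⊆ Ioi 0 ∪ Iio 0 := by
    rintro _ ⟨x, hx, rfl⟩
    exact (hf0 x hx).symm.lt_or_gt
  rcases (hs.image f hf).subset_or_subset isOpen_Ioi isOpen_Iio
      Ioi_disjoint_Iio_same hsub with hpos | hneg
  · exact Or.inl fun x hx => hpos ⟨x, hx, rfl⟩
  · exact Or.inr fun x hx => hneg ⟨x, hx, rfl⟩

lemma hasDerivAt_sub_rpow_const {l p x : ℝ} (hx : l < x) :
    HasDerivAt (fun y => (y - l) ^ p) (p * (x - l) ^ (p - 1)) x := by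
  simpa using ((hasDerivAt_id x).sub_const l).rpow_const (p := p) (Or.inl (sub_pos.2 hx).ne')

lemma monotoneOn_add_div_mul_sub_rpow_neg {a c l : ℝ} {s : Set ℝ} {g g' : ℝ → ℝ}
    (ha : 0 < a) (hs : Convex ℝ s) (hsl : s ⊆ Ioi l)
    (hderiv : ∀ x ∈ s, HasDerivWithinAt g (g' x) s x)
    (hlow : ∀ x ∈ s, c * (x - l) ^ (-(1 + a)) ≤ g' x) :
    MonotoneOn (fun x => g x + c / a * (x - l) ^ (-a)) s := by
  have hF : ∀ x ∈ s, HasDerivWithinAt (fun x => g x + c / a * (x - l) ^ (-a))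
      (g' x - c * (x - l) ^ (-(1 + a))) s x := by
    intro x hx
    refine ((hderiv x hx).add
      ((hasDerivAt_sub_rpow_const (hsl hx)).const_mul (c / a)).hasDerivWithinAt).congr_deriv ?_
    rw [show -a - 1 = -(1 + a) by ring]
    field_simp
    ring
  refine monotoneOn_of_hasDerivWithinAt_nonneg hs
    (fun x hx => (hF x hx).continuousWithinAt)
    (fun x hx => (hF x (interior_subset hx)).mono interior_subset)
    (fun x hx => sub_nonneg.2 (hlow x (interior_subset hx)))

lemma exists_forall_le_rpow_neg {a ε : ℝ} (ha : 0 < a) (hε : 0 < ε) (K : ℝ) :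
    ∃ δ, 0 < δ ∧ δ ≤ ε ∧ ∀ t ∈ Ioc 0 δ, K ≤ t ^ (-a) := by
  have hK : ∀ᶠ t in 𝓝[>] (0 : ℝ), K ≤ t ^ (-a) :=
    (tendsto_rpow_neg_nhdsGT_zero (neg_lt_zero.2 ha)).eventually_ge_atTop K
  obtain ⟨δ, hδ, hδK⟩ := mem_nhdsGT_iff_exists_Ioc_subset.1 hK
  exact ⟨min ε δ, lt_min hε hδ, min_le_left _ _,
    fun t ht => hδK ⟨ht.1, ht.2.trans (min_le_right _ _)⟩⟩

lemma exists_le_abs_of_le_deriv {a c l ε : ℝ} {g g' : ℝ → ℝ}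
    (ha : 0 < a) (hc : 0 < c) (hε : 0 < ε)
    (hderiv : ∀ x ∈ Ioc l (l + ε), HasDerivWithinAt g (g' x) (Ioc l (l + ε)) x)
    (hlow : ∀ x ∈ Ioc l (l + ε), c * (x - l) ^ (-(1 + a)) ≤ g' x) :
    ∃ δ, 0 < δ ∧ δ ≤ ε ∧ ∀ x ∈ Ioc l (l + δ), c / (2 * a) * (x - l) ^ (-a) ≤ |g x| := by
  have hmono := monotoneOn_add_div_mul_sub_rpow_neg ha (convex_Ioc l (l + ε))
    Ioc_subset_Ioi_self hderiv hlow
  set C := g (l + ε) + c / a * ε ^ (-a)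
  obtain ⟨δ, hδ, hδε, hδC⟩ := exists_forall_le_rpow_neg ha hε (2 * a / c * C)
  refine ⟨δ, hδ, hδε, fun x hx => ?_⟩
  have hxs : x ∈ Ioc l (l + ε) := ⟨hx.1, hx.2.trans (by linarith)⟩
  have hgC : g x + c / a * (x - l) ^ (-a) ≤ C := by
    simpa [C] using hmono hxs (right_mem_Ioc.2 (by linarith)) hxs.2
  have hCP : C ≤ c / (2 * a) * (x - l) ^ (-a) :=
    calc C = c / (2 * a) * (2 * a / c * C) := by field_simp
      _ ≤ c / (2 * a) * (x - l) ^ (-a) := by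
        gcongr
        exact hδC (x - l) ⟨sub_pos.2 hx.1, by linarith [hx.2]⟩
  have hhalf : c / a * (x - l) ^ (-a) = 2 * (c / (2 * a) * (x - l) ^ (-a)) := by
    field_simp
  linarith [neg_le_abs (g x)]

theorem stmt_4_general (a c l ε : ℝ) (ha0 : 0 < a) (hc : 0 < c) (hε : 0 < ε)
    (g g' : ℝ → ℝ)
    (hderiv : ∀ x ∈ Set.Ioc l (l + ε), HasDerivWithinAt g (g' x) (Set.Ioc l (l + ε)) x)
    (hcont : ContinuousOn g' (Set.Ioc l (l + ε)))
    (hlow : ∀ x ∈ Set.Ioc l (l + ε), c * (x - l) ^ (-(1 + a)) ≤ |g' x|) :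
    ∃ δ : ℝ, 0 < δ ∧ δ ≤ ε ∧
      ∀ x ∈ Set.Ioc l (l + δ), c / (2 * a) * (x - l) ^ (-a) ≤ |g x| := by
  have hg'0 : ∀ x ∈ Ioc l (l + ε), g' x ≠ 0 := fun x hx h0 => by
    have := hlow x hx
    rw [h0, abs_zero] at this
    exact this.not_gt (mul_pos hc (Real.rpow_pos_of_pos (sub_pos.2 hx.1) _))
  rcases isPreconnected_Ioc.forall_pos_or_forall_neg hcont hg'0 with hpos | hneg
  · exact exists_le_abs_of_le_deriv ha0 hc hε hderiv
      fun x hx => (hlow x hx).trans_eq (abs_of_pos (hpos x hx))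
  · simpa using exists_le_abs_of_le_deriv (g := fun x => -g x) ha0 hc hε
      (fun x hx => (hderiv x hx).neg)
      fun x hx => (hlow x hx).trans_eq (abs_of_neg (hneg x hx))

/-- Blow-up propagation step from the invariance part of the proof of Theorem 5.8
of the paper: if `|g'(x)| ≥ c (x-l)^{-(1+a)}` on `(l, l+ε]`, then near `l` one has
`|g(x)| ≥ (c/(2a)) (x-l)^{-a}`. -/
theorem stmt_4 (a c l ε : ℝ) (ha0 : 0 < a) (ha1 : a < 1) (hc : 0 < c) (hε : 0 < ε)
    (g g' : ℝ → ℝ)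
    (hderiv : ∀ x ∈ Set.Ioc l (l + ε), HasDerivWithinAt g (g' x) (Set.Ioc l (l + ε)) x)
    (hcont : ContinuousOn g' (Set.Ioc l (l + ε)))
    (hlow : ∀ x ∈ Set.Ioc l (l + ε), c * (x - l) ^ (-(1 + a)) ≤ |g' x|) :
    ∃ δ : ℝ, 0 < δ ∧ δ ≤ ε ∧
      ∀ x ∈ Set.Ioc l (l + δ), c / (2 * a) * (x - l) ^ (-a) ≤ |g x| :=
  stmt_4_general a c l ε ha0 hc hε g g' hderiv hcont hlow
end

section
/- Let l ∈ ℝ, ε > 0, and let ψ : (l, l+ε] → ℝ be continuously differentiable such that the limit lim_{x → l⁺} ψ'(x)·(x−l) exists and is nonzero. Then for every b ∈ (0,1], the function ψ is not b-Hölder on (l, l+ε]. -/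
/-!
If `ψ'(x)(x - l) → L > 0`, then `ψ' ≥ (L/2)/(x - l)` near `l`, so `ψ - (L/2) log (· - l)` is
monotone there and `ψ(x) ≤ C + (L/2) log (x - l) → -∞` as `x → l⁺` (for `L < 0` apply this to
`-ψ`). A Hölder function on the bounded interval `(l, l + ε]` is bounded, a contradiction.
-/

open Set Filter Topology Real

section
variable {ψ ψ' : ℝ → ℝ} {l K x y : ℝ}

lemma mul_log_sub_le_sub_of_le_deriv_mul_sub (hlx : l < x) (hxy : x ≤ y)
    (hd : ∀ c ∈ Icc x y, HasDerivWithinAt ψ (ψ' c) (Icc x y) c)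
    (hK : ∀ c ∈ Ioo x y, K ≤ ψ' c * (c - l)) :
    K * (log (y - l) - log (x - l)) ≤ ψ y - ψ x := by
  have hlog : ∀ c ∈ Icc x y, HasDerivAt (fun s => log (s - l)) (1 / (c - l)) c := fun c hc =>
    ((hasDerivAt_id' c).sub_const l).log (sub_ne_zero.2 (by linarith [hc.1]))
  have hg : ∀ c ∈ Icc x y, HasDerivWithinAt (fun s => ψ s - K * log (s - l))
      (ψ' c - K * (1 / (c - l))) (Icc x y) c := fun c hc =>
    (hd c hc).sub ((hlog c hc).hasDerivWithinAt.const_mul K)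
  have hmono : MonotoneOn (fun s => ψ s - K * log (s - l)) (Icc x y) := by
    refine monotoneOn_of_hasDerivWithinAt_nonneg (f' := fun c => ψ' c - K * (1 / (c - l)))
      (convex_Icc x y) (fun c hc => (hg c hc).continuousWithinAt) (fun c hc => ?_)
      (fun c hc => ?_) <;> rw [interior_Icc] at hc
    · rw [interior_Icc]
      exact (hg c (Ioo_subset_Icc_self hc)).mono Ioo_subset_Icc_self
    · rw [sub_nonneg, mul_one_div, div_le_iff₀ (by linarith [hc.1])]
      exact hK c hc
  have := hmono ⟨le_rfl, hxy⟩ ⟨hxy, le_rfl⟩ hxy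
  linarith

lemma tendsto_sub_nhdsGT_zero (l : ℝ) : Tendsto (fun x => x - l) (𝓝[>] l) (𝓝[>] 0) := by
  refine tendsto_nhdsWithin_iff.2
    ⟨?_, eventually_nhdsWithin_of_forall fun _ hx => sub_pos.2 (mem_Ioi.1 hx)⟩
  simpa using ((continuous_sub_right l).tendsto l).mono_left nhdsWithin_le_nhds

variable {r L : ℝ}

lemma tendsto_atBot_of_tendsto_deriv_mul_sub_pos (hr : l < r)
    (hd : ∀ x ∈ Ioc l r, HasDerivWithinAt ψ (ψ' x) (Ioc l r) x) (hL : 0 < L)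
    (hlim : Tendsto (fun x => ψ' x * (x - l)) (𝓝[>] l) (𝓝 L)) :
    Tendsto ψ (𝓝[>] l) atBot := by
  obtain ⟨y, hly, hy⟩ := mem_nhdsGT_iff_exists_Ioc_subset.1 <|
    (hlim.eventually (eventually_gt_nhds (half_lt_self hL))).and (Ioc_mem_nhdsGT hr)
  have hbound : ∀ x ∈ Ioo l y, ψ x ≤ ψ y - L / 2 * log (y - l) + L / 2 * log (x - l) := by
    intro x hx
    have hsub : Icc x y ⊆ Ioc l r := fun c hc => (hy ⟨hx.1.trans_le hc.1, hc.2⟩).2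
    have := mul_log_sub_le_sub_of_le_deriv_mul_sub (ψ' := ψ') hx.1 hx.2.le
      (fun c hc => (hd c (hsub hc)).mono hsub)
      (fun c hc => (hy ⟨hx.1.trans hc.1, hc.2.le⟩).1.le)
    linarith
  refine tendsto_atBot_mono' _ (eventually_of_mem (Ioo_mem_nhdsGT hly) hbound) ?_
  exact tendsto_atBot_add_const_left _ _
    ((tendsto_log_nhdsGT_zero.comp (tendsto_sub_nhdsGT_zero l)).const_mul_atBot (half_pos hL))

lemma tendsto_abs_atTop_of_tendsto_deriv_mul_sub (hr : l < r)
    (hd : ∀ x ∈ Ioc l r, HasDerivWithinAt ψ (ψ' x) (Ioc l r) x) (hL : L ≠ 0)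
    (hlim : Tendsto (fun x => ψ' x * (x - l)) (𝓝[>] l) (𝓝 L)) :
    Tendsto (fun x => |ψ x|) (𝓝[>] l) atTop := by
  rcases hL.lt_or_gt with hneg | hpos
  · have hlim' : Tendsto (fun x => -ψ' x * (x - l)) (𝓝[>] l) (𝓝 (-L)) := by
      simpa only [neg_mul] using hlim.neg
    simpa [Function.comp_def] using tendsto_abs_atBot_atTop.comp <|
      tendsto_atBot_of_tendsto_deriv_mul_sub_pos hr (fun x hx => (hd x hx).neg)
        (neg_pos.2 hneg) hlim'
  · exact tendsto_abs_atBot_atTop.comp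
      (tendsto_atBot_of_tendsto_deriv_mul_sub_pos hr hd hpos hlim)

end

lemma abs_le_of_forall_abs_sub_le_mul_rpow {ψ : ℝ → ℝ} {l ε b M : ℝ} (hε : 0 < ε) (hb : 0 ≤ b)
    (hM : 0 ≤ M)
    (hHolder : ∀ x ∈ Ioc l (l + ε), ∀ y ∈ Ioc l (l + ε), |ψ x - ψ y| ≤ M * |x - y| ^ b) :
    ∀ x ∈ Ioc l (l + ε), |ψ x| ≤ |ψ (l + ε)| + M * ε ^ b := by
  intro x hx
  have hdist : |x - (l + ε)| ≤ ε := by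
    rw [abs_sub_comm, abs_of_nonneg (by linarith [hx.2])]
    linarith [hx.1]
  calc |ψ x| ≤ |ψ (l + ε)| + |ψ x - ψ (l + ε)| := by
        linarith [abs_sub_abs_le_abs_sub (ψ x) (ψ (l + ε))]
    _ ≤ |ψ (l + ε)| + M * |x - (l + ε)| ^ b := by
        gcongr
        exact hHolder x hx _ (right_mem_Ioc.2 (lt_add_of_pos_right l hε))
    _ ≤ |ψ (l + ε)| + M * ε ^ b := by gcongr

theorem stmt_7_general (l ε : ℝ) (hε : 0 < ε)
    (ψ ψ' : ℝ → ℝ)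
    (hd : ∀ x ∈ Set.Ioc l (l + ε), HasDerivWithinAt ψ (ψ' x) (Set.Ioc l (l + ε)) x)
    (L : ℝ) (hL : L ≠ 0)
    (hlim : Filter.Tendsto (fun x => ψ' x * (x - l))
      (nhdsWithin l (Set.Ioi l)) (nhds L)) :
    ∀ b : ℝ, 0 < b → b ≤ 1 →
      ¬ ∃ M : ℝ, 0 ≤ M ∧ ∀ x ∈ Set.Ioc l (l + ε), ∀ y ∈ Set.Ioc l (l + ε),
        |ψ x - ψ y| ≤ M * |x - y| ^ b := by
  rintro b hb - ⟨M, hM, hHolder⟩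
  have hr : l < l + ε := lt_add_of_pos_right l hε
  have hbdd := abs_le_of_forall_abs_sub_le_mul_rpow hε hb.le hM hHolder
  obtain ⟨x, hx_large, hx⟩ := ((tendsto_abs_atTop_of_tendsto_deriv_mul_sub hr hd hL hlim
    ).eventually_gt_atTop (|ψ (l + ε)| + M * ε ^ b)).and (Ioc_mem_nhdsGT hr) |>.exists
  exact (hbdd x hx).not_gt hx_large

/-- Invariance argument for the functionals `C^{a,±}_{α,n}` in the proof of
Theorem 5.8 of the paper (case `a = 0`): if `ψ'(x)(x-l)` has a nonzero limit as
`x → l⁺`, then `ψ` is not `b`-Hölder on `(l, l+ε]` for any `b ∈ (0,1]`. -/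
theorem stmt_7 (l ε : ℝ) (hε : 0 < ε)
    (ψ ψ' : ℝ → ℝ)
    (hd : ∀ x ∈ Set.Ioc l (l + ε), HasDerivWithinAt ψ (ψ' x) (Set.Ioc l (l + ε)) x)
    (hcont : ContinuousOn ψ' (Set.Ioc l (l + ε)))
    (L : ℝ) (hL : L ≠ 0)
    (hlim : Filter.Tendsto (fun x => ψ' x * (x - l))
      (nhdsWithin l (Set.Ioi l)) (nhds L)) :
    ∀ b : ℝ, 0 < b → b ≤ 1 →
      ¬ ∃ M : ℝ, 0 ≤ M ∧ ∀ x ∈ Set.Ioc l (l + ε), ∀ y ∈ Set.Ioc l (l + ε),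
        |ψ x - ψ y| ≤ M * |x - y| ^ b :=
  stmt_7_general l ε hε ψ ψ' hd L hL hlim
end

section
/- Let d ≥ 1 and let (Z_k)_{k ≥ 1} be a sequence of linear automorphisms of ℝ^d. For 0 ≤ k ≤ l set Q(k,l) = Z_l ∘ ⋯ ∘ Z_{k+1} (the identity when k = l) and Q(l) = Q(0,l). Let (E_k)_{k ≥ 0} and (U_k)_{k ≥ 0} be linear subspaces of ℝ^d with ℝ^d = E_k ⊕ U_k, Z_{k+1}(E_k) = E_{k+1} and Z_{k+1}(U_k) = U_{k+1} for all k ≥ 0, and let P_k denote the linear projection of ℝ^d onto U_k along E_k. Let (v_k)_{k ≥ 0} be a sequence in ℝ^d, set Δv_0 = v_0 and Δv_l = v_l − Z_l v_{l−1} for l ≥ 1, and assume Σ_{l ≥ 0} ‖Q(l)^{−1} P_l Δv_l‖ < ∞, so that v = Σ_{l ≥ 0} Q(l)^{−1} P_l Δv_l is well defined. Then for every k ≥ 0, ‖Q(k)v − v_k‖ ≤ Σ_{l > k} ‖Q(k,l)^{−1} P_l Δv_l‖ + Σ_{0 ≤ l ≤ k} ‖Q(l,k)(Δv_l − P_l Δv_l)‖.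 -/
/-!
By telescoping, `v k = ∑_{l ≤ k} Q(l,k) Δv_l`. Splitting the series defining `v` at `k` and using
the cocycle identity `Q(k) ∘ Q(l)⁻¹ = Q(l,k)` for `l ≤ k` and `= Q(k,l)⁻¹` for `l > k` gives
`Q(k) v - v k = ∑_{l > k} Q(k,l)⁻¹ w_l - ∑_{l ≤ k} Q(l,k) (Δv_l - w_l)` with `w_l = P_l Δv_l`;
the estimate is the triangle inequality.
-/

open Finset

structure IsCocycle {R M : Type*} [Semiring R] [AddCommMonoid M] [Module R M]
    (Z : ℕ → M ≃ₗ[R] M) (Q : ℕ → ℕ → M ≃ₗ[R] M) : Prop where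
  refl : ∀ k, Q k k = LinearEquiv.refl R M
  succ : ∀ k l, k ≤ l → Q k (l + 1) = (Q k l).trans (Z (l + 1))

namespace IsCocycle

section Algebra

variable {R M : Type*} [Semiring R] [AddCommGroup M] [Module R M]
  {Z : ℕ → M ≃ₗ[R] M} {Q : ℕ → ℕ → M ≃ₗ[R] M}

theorem eq_trans (hQ : IsCocycle Z Q) {j m l : ℕ} (hjm : j ≤ m) (hml : m ≤ l) :
    Q j l = (Q j m).trans (Q m l) := by
  induction l, hml using Nat.le_induction with
  | base => rw [hQ.refl]; rfl
  | succ l hml ih =>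
    rw [hQ.succ j l (hjm.trans hml), hQ.succ m l hml, ih]
    rfl

theorem apply_symm_of_le (hQ : IsCocycle Z Q) {j l k : ℕ} (hjl : j ≤ l) (hlk : l ≤ k) (x : M) :
    Q j k ((Q j l).symm x) = Q l k x := by
  rw [hQ.eq_trans hjl hlk]
  simp

theorem apply_symm_of_ge (hQ : IsCocycle Z Q) {j k l : ℕ} (hjk : j ≤ k) (hkl : k ≤ l) (x : M) :
    Q j k ((Q j l).symm x) = (Q k l).symm x := by
  rw [hQ.eq_trans hjk hkl, LinearEquiv.symm_trans_apply, LinearEquiv.apply_symm_apply]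

theorem eq_sum_range_apply (hQ : IsCocycle Z Q) {v dv : ℕ → M} (h0 : dv 0 = v 0)
    (hsucc : ∀ l, dv (l + 1) = v (l + 1) - Z (l + 1) (v l)) (k : ℕ) :
    v k = ∑ l ∈ range (k + 1), Q l k (dv l) := by
  induction k with
  | zero => simp [hQ.refl, h0]
  | succ k ih =>
    have hZ : Z (k + 1) (v k) = ∑ l ∈ range (k + 1), Q l (k + 1) (dv l) := by
      rw [ih, map_sum]
      refine sum_congr rfl fun l hl => ?_
      rw [hQ.succ l k (mem_range_succ_iff.mp hl)]
      rfl
    rw [sum_range_succ, ← hZ, hQ.refl, hsucc]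
    simp

end Algebra

section Analysis

variable {𝕜 V : Type*} [NontriviallyNormedField 𝕜] [CompleteSpace 𝕜]
  [NormedAddCommGroup V] [NormedSpace 𝕜 V] [FiniteDimensional 𝕜 V]
  {Z : ℕ → V ≃ₗ[𝕜] V} {Q : ℕ → ℕ → V ≃ₗ[𝕜] V}

theorem apply_tsum_symm_sub_eq (hQ : IsCocycle Z Q) {v dv w : ℕ → V} (h0 : dv 0 = v 0)
    (hsucc : ∀ l, dv (l + 1) = v (l + 1) - Z (l + 1) (v l))
    (hw : Summable fun l => (Q 0 l).symm (w l)) (k : ℕ) :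
    Q 0 k (∑' l, (Q 0 l).symm (w l)) - v k =
      (∑' l, (Q k (k + 1 + l)).symm (w (k + 1 + l))) -
        ∑ l ∈ range (k + 1), Q l k (dv l - w l) := by
  have head : ∀ l ∈ range (k + 1), Q 0 k ((Q 0 l).symm (w l)) = Q l k (w l) := fun l hl =>
    hQ.apply_symm_of_le l.zero_le (mem_range_succ_iff.mp hl) _
  have tail : ∀ l, Q 0 k ((Q 0 (l + (k + 1))).symm (w (l + (k + 1)))) =
      (Q k (k + 1 + l)).symm (w (k + 1 + l)) := fun l => by
    rw [add_comm l]; exact hQ.apply_symm_of_ge k.zero_le (by omega) _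
  rw [← hw.sum_add_tsum_nat_add (k + 1), map_add, map_sum, sum_congr rfl head,
    ← LinearEquiv.coe_toContinuousLinearEquiv' (Q 0 k), ContinuousLinearEquiv.map_tsum,
    LinearEquiv.coe_toContinuousLinearEquiv', tsum_congr tail, hQ.eq_sum_range_apply h0 hsucc k]
  simp only [map_sub, sum_sub_distrib]
  abel

theorem summable_norm_symm_tail (hQ : IsCocycle Z Q) {w : ℕ → V}
    (hw : Summable fun l => ‖(Q 0 l).symm (w l)‖) (k : ℕ) :
    Summable fun l => ‖(Q k (k + 1 + l)).symm (w (k + 1 + l))‖ := by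
  let f : V →L[𝕜] V := LinearMap.toContinuousLinearMap (Q 0 k : V →ₗ[𝕜] V)
  have hshift : Summable fun l => ‖(Q 0 (k + 1 + l)).symm (w (k + 1 + l))‖ :=
    hw.comp_injective (add_right_injective (k + 1))
  refine (hshift.mul_left ‖f‖).of_nonneg_of_le (fun _ => norm_nonneg _) fun l => ?_
  rw [← hQ.apply_symm_of_ge k.zero_le (by omega)]
  exact f.le_opNorm _

end Analysis

end IsCocycle

theorem stmt_11_general (d : ℕ)
    (Z : ℕ → (Fin d → ℝ) ≃ₗ[ℝ] (Fin d → ℝ))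
    (Q : ℕ → ℕ → (Fin d → ℝ) ≃ₗ[ℝ] (Fin d → ℝ))
    (hQrefl : ∀ k, Q k k = LinearEquiv.refl ℝ (Fin d → ℝ))
    (hQsucc : ∀ k l, k ≤ l → Q k (l + 1) = (Q k l).trans (Z (l + 1)))
    (P : ℕ → (Fin d → ℝ) →ₗ[ℝ] (Fin d → ℝ))
    (v dv : ℕ → Fin d → ℝ)
    (hdv0 : dv 0 = v 0)
    (hdv : ∀ l, dv (l + 1) = v (l + 1) - Z (l + 1) (v l))
    (hsum : Summable (fun l => ‖(Q 0 l).symm (P l (dv l))‖)) :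
    ∀ k : ℕ,
      ‖Q 0 k (∑' l, (Q 0 l).symm (P l (dv l))) - v k‖ ≤
        (∑' l : ℕ, ‖(Q k (k + 1 + l)).symm (P (k + 1 + l) (dv (k + 1 + l)))‖) +
        ∑ l ∈ Finset.range (k + 1), ‖Q l k (dv l - P l (dv l))‖ := by
  intro k
  have hQ : IsCocycle Z Q := ⟨hQrefl, hQsucc⟩
  rw [hQ.apply_tsum_symm_sub_eq hdv0 hdv hsum.of_norm k]
  exact (norm_sub_le _ _).trans <| add_le_add
    (norm_tsum_le_tsum_norm (hQ.summable_norm_symm_tail hsum k)) (norm_sum_le _ _)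

/-- Abstract form of the error estimate (4.4) in Lemma 4.1 of the paper. -/
theorem stmt_11 (d : ℕ) (hd : 1 ≤ d)
    (Z : ℕ → (Fin d → ℝ) ≃ₗ[ℝ] (Fin d → ℝ))
    (Q : ℕ → ℕ → (Fin d → ℝ) ≃ₗ[ℝ] (Fin d → ℝ))
    (hQrefl : ∀ k, Q k k = LinearEquiv.refl ℝ (Fin d → ℝ))
    (hQsucc : ∀ k l, k ≤ l → Q k (l + 1) = (Q k l).trans (Z (l + 1)))
    (E U : ℕ → Submodule ℝ (Fin d → ℝ))
    (hcompl : ∀ k, IsCompl (E k) (U k))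
    (hZE : ∀ k, (E k).map (Z (k + 1) : (Fin d → ℝ) →ₗ[ℝ] (Fin d → ℝ)) = E (k + 1))
    (hZU : ∀ k, (U k).map (Z (k + 1) : (Fin d → ℝ) →ₗ[ℝ] (Fin d → ℝ)) = U (k + 1))
    (P : ℕ → (Fin d → ℝ) →ₗ[ℝ] (Fin d → ℝ))
    (hPE : ∀ k, ∀ x ∈ E k, P k x = 0)
    (hPU : ∀ k, ∀ x ∈ U k, P k x = x)
    (v dv : ℕ → Fin d → ℝ)
    (hdv0 : dv 0 = v 0)
    (hdv : ∀ l, dv (l + 1) = v (l + 1) - Z (l + 1) (v l))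
    (hsum : Summable (fun l => ‖(Q 0 l).symm (P l (dv l))‖)) :
    ∀ k : ℕ,
      ‖Q 0 k (∑' l, (Q 0 l).symm (P l (dv l))) - v k‖ ≤
        (∑' l : ℕ, ‖(Q k (k + 1 + l)).symm (P (k + 1 + l) (dv (k + 1 + l)))‖) +
        ∑ l ∈ Finset.range (k + 1), ‖Q l k (dv l - P l (dv l))‖ :=
  stmt_11_general d Z Q hQrefl hQsucc P v dv hdv0 hdv hsum
end

section
/- Let l ∈ ℝ and L > 0. For every Lebesgue measurable set J ⊆ (l, l+L] of Lebesgue measure m > 0, one has ∫_J log(L/(x−l)) dx ≤ m·(1 + log(L/m)). -/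
/-!
The kernel `x ↦ log (L / (x - l))` is decreasing on `(l, ∞)`, so with `I = (l, l + m]` it is
at least `log (L / m)` on `I \ J` and at most `log (L / m)` on `J \ I`; as these two sets have
the same measure, trading one for the other shows `∫_J ≤ ∫_I` (bathtub principle). On `I`
the integral is computed from `∫ log = y log y - y`.
-/

open MeasureTheory Set Real

namespace MeasureTheory

variable {α : Type*} [MeasurableSpace α] {μ : Measure α} {f : α → ℝ} {s t : Set α}

theorem setIntegral_le_setIntegral_of_measure_eq (hs : MeasurableSet s) (ht : MeasurableSet t)
    (hst : μ s = μ t) (hs_fin : μ s ≠ ⊤) (hfs : IntegrableOn f s μ)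
    (hft : IntegrableOn f t μ) (c : ℝ) (h_out : ∀ x ∈ s \ t, f x ≤ c)
    (h_in : ∀ x ∈ t \ s, c ≤ f x) :
    ∫ x in s, f x ∂μ ≤ ∫ x in t, f x ∂μ := by
  have h_sdiff : μ (s \ t) = μ (t \ s) :=
    measure_sdiff_symm hs.nullMeasurableSet ht.nullMeasurableSet hst
      (measure_ne_top_of_subset inter_subset_left hs_fin)
  have h_sdiff_fin : μ (s \ t) ≠ ⊤ := measure_ne_top_of_subset sdiff_subset hs_fin
  have h_le : ∫ x in s \ t, f x ∂μ ≤ ∫ x in t \ s, f x ∂μ :=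
    calc ∫ x in s \ t, f x ∂μ ≤ ∫ _ in s \ t, c ∂μ :=
          setIntegral_mono_on (hfs.mono_set sdiff_subset) (integrableOn_const h_sdiff_fin)
            (hs.diff ht) h_out
      _ = ∫ _ in t \ s, c ∂μ := by simp only [setIntegral_const, measureReal_def, h_sdiff]
      _ ≤ ∫ x in t \ s, f x ∂μ :=
          setIntegral_mono_on (integrableOn_const (h_sdiff ▸ h_sdiff_fin))
            (hft.mono_set sdiff_subset) (ht.diff hs) h_in
  rw [← integral_inter_add_sdiff ht hfs, ← integral_inter_add_sdiff hs hft, inter_comm t s]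
  gcongr

end MeasureTheory

namespace Real

theorem log_div_eq_sub_ae {L : ℝ} (hL : L ≠ 0) : ∀ᵐ y, log (L / y) = log L - log y := by
  filter_upwards [compl_mem_ae_iff.2 (measure_singleton (0 : ℝ))] with y hy
  exact log_div hL hy

theorem intervalIntegrable_log_div_left (L a b : ℝ) :
    IntervalIntegrable (fun y => log (L / y)) volume a b := by
  rcases eq_or_ne L 0 with rfl | hL
  · simp
  · exact (intervalIntegrable_const.sub intervalIntegral.intervalIntegrable_log').congr_ae
      (ae_restrict_of_ae ((log_div_eq_sub_ae hL).mono fun _ h => h.symm))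

theorem integral_log_div_left {L : ℝ} (hL : L ≠ 0) (m : ℝ) :
    ∫ y in (0)..m, log (L / y) = m * (1 + log (L / m)) := by
  rw [intervalIntegral.integral_congr_ae ((log_div_eq_sub_ae hL).mono fun _ h _ => h),
    intervalIntegral.integral_sub intervalIntegrable_const
      intervalIntegral.intervalIntegrable_log', integral_log]
  rcases eq_or_ne m 0 with rfl | hm
  · simp
  · rw [log_div hL hm]
    simp only [intervalIntegral.integral_const, sub_zero, smul_eq_mul, log_zero, mul_zero,
      add_zero]
    ring

theorem antitoneOn_log_div_sub {L : ℝ} (hL : 0 < L) (l : ℝ) :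
    AntitoneOn (fun x => log (L / (x - l))) (Ioi l) := by
  intro a ha b _ hab
  have ha : 0 < a - l := sub_pos.2 ha
  exact log_le_log (div_pos hL (ha.trans_le (by linarith)))
    (div_le_div_of_nonneg_left hL.le ha (by linarith))

theorem setIntegral_Ioc_log_div_sub {L m : ℝ} (hL : L ≠ 0) (hm : 0 ≤ m) (l : ℝ) :
    ∫ x in Ioc l (l + m), log (L / (x - l)) = m * (1 + log (L / m)) := by
  rw [← intervalIntegral.integral_of_le (by linarith),
    intervalIntegral.integral_comp_sub_right (fun y => log (L / y)), sub_self,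
    add_sub_cancel_left, integral_log_div_left hL]

theorem integrableOn_Ioc_log_div_sub (L l b : ℝ) :
    IntegrableOn (fun x => log (L / (x - l))) (Ioc l b) := by
  simpa using ((intervalIntegrable_log_div_left L 0 (b - l)).comp_sub_right l).1

end Real

theorem stmt_18_general (l L : ℝ) (hL : 0 < L)
    (J : Set ℝ) (hJ : MeasurableSet J) (hJsub : J ⊆ Set.Ioc l (l + L)) :
    ∫ x in J, Real.log (L / (x - l)) ≤
      (volume J).toReal * (1 + Real.log (L / (volume J).toReal)) := by
  set m := (volume J).toReal
  have hJ_fin : volume J ≠ ⊤ := measure_ne_top_of_subset hJsub measure_Ioc_lt_top.ne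
  have hmL : m ≤ L := by
    simpa [m, hL.le] using ENNReal.toReal_mono (by simp) (measure_mono (μ := volume) hJsub)
  rcases (show 0 ≤ m from ENNReal.toReal_nonneg).eq_or_lt with hm | hm
  · have hJ_null : volume J = 0 :=
      (ENNReal.toReal_eq_zero_iff _).1 hm.symm |>.resolve_right hJ_fin
    rw [setIntegral_measure_zero _ hJ_null, ← hm, zero_mul]
  have hI : volume (Ioc l (l + m)) = volume J := by simp [Real.volume_Ioc, m, hJ_fin]
  have hint := integrableOn_Ioc_log_div_sub L l (l + L)
  have hf := antitoneOn_log_div_sub hL l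
  calc ∫ x in J, log (L / (x - l))
      ≤ ∫ x in Ioc l (l + m), log (L / (x - l)) :=
        setIntegral_le_setIntegral_of_measure_eq hJ measurableSet_Ioc hI.symm hJ_fin
          (hint.mono_set hJsub) (hint.mono_set (Ioc_subset_Ioc_right (by linarith)))
          (log (L / m)) ?_ ?_
    _ = m * (1 + log (L / m)) := setIntegral_Ioc_log_div_sub hL.ne' hm.le l
  · rintro x ⟨hxJ, hxI⟩
    have hlx := (hJsub hxJ).1
    simpa using hf (show l < l + m by linarith) hlx (not_le.1 fun h => hxI ⟨hlx, h⟩).le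
  · rintro x ⟨⟨hlx, hxm⟩, -⟩
    simpa using hf hlx (show l < l + m by linarith) hxm

/-- Rearrangement inequality used in the proof of Lemma 5.3 of the paper
(case `a = 0`): among all measurable subsets of `(l, l+L]` of measure `m > 0`,
the integral of `x ↦ log(L/(x-l))` is at most `m (1 + log(L/m))`. -/
theorem stmt_18 (l L : ℝ) (hL : 0 < L)
    (J : Set ℝ) (hJ : MeasurableSet J) (hJsub : J ⊆ Set.Ioc l (l + L))
    (hJpos : 0 < volume J) :
    ∫ x in J, Real.log (L / (x - l)) ≤
      (volume J).toReal * (1 + Real.log (L / (volume J).toReal)) :=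
  stmt_18_general l L hL J hJ hJsub
end
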